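/- Let T be a tree with bipartition (A,B), 1 ≤ |A| ≤ |B|. Then γ(T) = |A| if and only if: (a) every support vertex v ∈ B is a weak support and all non-leaf neighbors of v are support vertices; and (b) for any two vertices x, y ∈ A that are neither leaves nor supports, d(x,y) ≠ 2. -/

import Mathlib

/-!
Since every vertex of `B` has a neighbour in `A`, the side `A` dominates and `γ(T) ≤ |A|`.
If some `v ∈ B` has two neighbours `x, y`, each a leaf or not a support, then
`(A \ {x, y}) ∪ {v}` still dominates: a vertex `w ≠ v` of `B` adjacent to `x` cannot be a leaf
(`x` would be a support, or `w` its only neighbour `v`), and cannot also be adjacent to `y`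
(a tree has no 4-cycle), so it keeps a dominator in `A \ {x, y}`. Hence `γ(T) = |A|` forces (a)
and (b), which exclude exactly these configurations. Conversely, given (a) and (b), every
dominating set `D` receives an injection from `A`: keep `a ∈ D`, send a support `a ∉ D` to one
of its leaves (which must lie in `D`), and any other `a` to a dominator; by (a) and (b) no two
non-supports of `A` share a neighbour.
-/

open Finset

variable {V : Type} [Fintype V] [DecidableEq V]

def IsDomSet (G : SimpleGraph V) (D : Finset V) : Prop :=
  ∀ v : V, v ∉ D → ∃ u ∈ D, G.Adj u v

noncomputable def domNum (G : SimpleGraph V) : ℕ :=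
  sInf {n | ∃ D : Finset V, IsDomSet G D ∧ D.card = n}

def IsVertexCover (G : SimpleGraph V) (C : Finset V) : Prop :=
  ∀ ⦃u v : V⦄, G.Adj u v → u ∈ C ∨ v ∈ C

noncomputable def coverNum (G : SimpleGraph V) : ℕ :=
  sInf {n | ∃ C : Finset V, IsVertexCover G C ∧ C.card = n}

def IsIndepFinset (G : SimpleGraph V) (I : Finset V) : Prop :=
  ∀ u ∈ I, ∀ v ∈ I, ¬ G.Adj u v

noncomputable def indepNum (G : SimpleGraph V) : ℕ :=
  sSup {n | ∃ I : Finset V, IsIndepFinset G I ∧ I.card = n}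

def IsLeaf (G : SimpleGraph V) [DecidableRel G.Adj] (v : V) : Prop :=
  G.degree v = 1

def IsSupport (G : SimpleGraph V) [DecidableRel G.Adj] (v : V) : Prop :=
  ∃ u, G.Adj v u ∧ IsLeaf G u

def IsWeakSupport (G : SimpleGraph V) [DecidableRel G.Adj] (v : V) : Prop :=
  ((G.neighborFinset v).filter fun l => G.degree l = 1).card = 1

def IsBipartition (G : SimpleGraph V) (A B : Finset V) : Prop :=
  A ∪ B = Finset.univ ∧ Disjoint A B ∧
    ∀ ⦃u v : V⦄, G.Adj u v → (u ∈ A ∧ v ∈ B) ∨ (u ∈ B ∧ v ∈ A)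

namespace SimpleGraph

variable {W : Type*} {G : SimpleGraph W} {x y v w : W}

theorem IsAcyclic.eq_of_mem_commonNeighbors (hG : G.IsAcyclic) (hxy : x ≠ y)
    (hv : v ∈ G.commonNeighbors x y) (hw : w ∈ G.commonNeighbors x y) : v = w := by
  rw [mem_commonNeighbors] at hv hw
  have hpath {u : W} (hxu : G.Adj x u) (hyu : G.Adj y u) :
      (Walk.cons hxu (Walk.cons hyu.symm Walk.nil)).IsPath := by
    simp [hxu.ne, hxy, hyu.ne.symm]
  have := (hG.subsingleton_path x y).elim ⟨_, hpath hv.1 hv.2⟩ ⟨_, hpath hw.1 hw.2⟩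
  simpa using congrArg (fun p : G.Path x y => p.1.support) this

theorem Reachable.dist_eq_two_iff (h : G.Reachable x y) :
    G.dist x y = 2 ↔ x ≠ y ∧ ¬ G.Adj x y ∧ (G.commonNeighbors x y).Nonempty := by
  rw [← edist_eq_two_iff, ← h.coe_dist_eq_edist]
  norm_cast

end SimpleGraph

section Domination

variable {W : Type} {G : SimpleGraph W} {D : Finset W}

theorem domNum_le_card (hD : IsDomSet G D) : domNum G ≤ D.card :=
  Nat.sInf_le ⟨D, hD, rfl⟩

theorem domNum_eq_card_of_forall_le (hD : IsDomSet G D)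
    (hmin : ∀ D', IsDomSet G D' → D.card ≤ D'.card) : domNum G = D.card :=
  le_antisymm (domNum_le_card hD) (le_csInf ⟨_, D, hD, rfl⟩ fun _ ⟨D', hD', h⟩ => h ▸ hmin D' hD')

end Domination

namespace IsBipartition

variable {G : SimpleGraph V} {A B : Finset V} {u v w x y : V}

theorem notMem_right (hbip : IsBipartition G A B) (hu : u ∈ A) : u ∉ B :=
  disjoint_left.mp hbip.2.1 hu

theorem mem_right_of_notMem_left (hbip : IsBipartition G A B) (hu : u ∉ A) : u ∈ B := by
  simpa [hu] using (hbip.1 ▸ mem_univ u : u ∈ A ∪ B)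

theorem mem_right_of_adj (hbip : IsBipartition G A B) (h : G.Adj u w) (hu : u ∈ A) : w ∈ B := by
  rcases hbip.2.2 h with ⟨_, hw⟩ | ⟨hu', _⟩
  · exact hw
  · exact absurd hu' (hbip.notMem_right hu)

theorem mem_left_of_adj (hbip : IsBipartition G A B) (h : G.Adj u w) (hu : u ∈ B) : w ∈ A := by
  rcases hbip.2.2 h with ⟨hu', _⟩ | ⟨_, hw⟩
  · exact absurd hu (hbip.notMem_right hu')
  · exact hw

theorem not_adj_of_mem_left (hbip : IsBipartition G A B) (hu : u ∈ A) (hw : w ∈ A) :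
    ¬ G.Adj u w :=
  fun h => hbip.notMem_right hw (hbip.mem_right_of_adj h hu)

theorem isDomSet_left (hbip : IsBipartition G A B) (hconn : G.Connected) (hA : A.Nonempty) :
    IsDomSet G A := by
  intro w hw
  obtain ⟨a, ha⟩ := hA
  obtain ⟨u, hwu⟩ := (hconn w a).nonempty_neighborSet_left (ne_of_mem_of_not_mem ha hw).symm
  exact ⟨u, hbip.mem_left_of_adj hwu (hbip.mem_right_of_notMem_left hw), hwu.symm⟩

theorem domNum_lt_card_left (hbip : IsBipartition G A B) (hv : v ∈ B) (hxy : x ≠ y)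
    (hvx : G.Adj v x) (hvy : G.Adj v y)
    (hother : ∀ w ∈ B, w ≠ v → ∃ u, G.Adj w u ∧ u ≠ x ∧ u ≠ y) : domNum G < A.card := by
  have hxA := hbip.mem_left_of_adj hvx hv
  have hyA := hbip.mem_left_of_adj hvy hv
  have hpair : {x, y} ⊆ A := insert_subset hxA (singleton_subset_iff.mpr hyA)
  have hdom : IsDomSet G (insert v (A \ {x, y})) := by
    intro w hw
    by_cases hwA : w ∈ A
    · have hwxy : w = x ∨ w = y := by
        simp only [mem_insert, mem_sdiff, hwA, mem_singleton] at hw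
        tauto
      rcases hwxy with rfl | rfl
      exacts [⟨v, mem_insert_self _ _, hvx⟩, ⟨v, mem_insert_self _ _, hvy⟩]
    · have hwv : w ≠ v := fun h => hw (h ▸ mem_insert_self _ _)
      obtain ⟨u, hwu, hux, huy⟩ := hother w (hbip.mem_right_of_notMem_left hwA) hwv
      refine ⟨u, mem_insert_of_mem (mem_sdiff.mpr ⟨?_, by simp [hux, huy]⟩), hwu.symm⟩
      exact hbip.mem_left_of_adj hwu (hbip.mem_right_of_notMem_left hwA)
  have h2 : 2 ≤ A.card := card_pair hxy ▸ card_le_card hpair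
  have hcard : (insert v (A \ {x, y})).card = A.card - 1 := by
    rw [card_insert_of_notMem (fun h => hbip.notMem_right (mem_sdiff.mp h).1 hv),
      card_sdiff_of_subset hpair, card_pair hxy]
    omega
  have := domNum_le_card hdom
  omega

end IsBipartition

section Leaves

variable {W : Type} [Fintype W] {G : SimpleGraph W} [DecidableRel G.Adj] {D : Finset W}
  {l u v w x y : W}

theorem IsLeaf.eq_of_adj (hl : IsLeaf G l) (hu : G.Adj l u) (hw : G.Adj l w) : u = w :=
  (SimpleGraph.degree_eq_one_iff_existsUnique_adj.mp hl).unique hu hw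

theorem isLeaf_of_forall_adj_eq (hwx : G.Adj w x) (h : ∀ z, G.Adj w z → z = x) : IsLeaf G w :=
  SimpleGraph.degree_eq_one_iff_existsUnique_adj.mpr ⟨x, hwx, h⟩

theorem isWeakSupport_iff (hv : IsSupport G v) :
    IsWeakSupport G v ↔ ∀ x y, G.Adj v x → IsLeaf G x → G.Adj v y → IsLeaf G y → x = y := by
  obtain ⟨l, hvl, hl⟩ := hv
  have hmem {z : W} : z ∈ (G.neighborFinset v).filter (fun l => G.degree l = 1) ↔
      G.Adj v z ∧ IsLeaf G z := by
    rw [mem_filter, SimpleGraph.mem_neighborFinset, IsLeaf]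
  constructor
  · intro h x y hvx hx hvy hy
    exact card_le_one.mp h.le x (hmem.mpr ⟨hvx, hx⟩) y (hmem.mpr ⟨hvy, hy⟩)
  · intro h
    refine le_antisymm (card_le_one.mpr fun a ha b hb => ?_) (card_pos.mpr ⟨l, hmem.mpr ⟨hvl, hl⟩⟩)
    exact h a b (hmem.mp ha).1 (hmem.mp ha).2 (hmem.mp hb).1 (hmem.mp hb).2

theorem exists_adj_ne_of_adj_of_mem_commonNeighbors (hG : G.IsAcyclic) (hxy : x ≠ y)
    (hv : v ∈ G.commonNeighbors x y) (hx : IsLeaf G x ∨ ¬ IsSupport G x) (hwv : w ≠ v)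
    (hwx : G.Adj w x) : ∃ u, G.Adj w u ∧ u ≠ x ∧ u ≠ y := by
  rw [SimpleGraph.mem_commonNeighbors] at hv
  rcases hx with hx | hx
  · exact absurd (hx.eq_of_adj hwx.symm hv.1) hwv
  by_contra! hall
  have hwy : ¬ G.Adj w y := fun hwy =>
    hwv (hG.eq_of_mem_commonNeighbors hxy ⟨hwx.symm, hwy.symm⟩ hv)
  refine hx ⟨w, hwx.symm, isLeaf_of_forall_adj_eq hwx fun z hwz => ?_⟩
  by_contra hzx
  exact hwy (hall z hwz hzx ▸ hwz)

theorem exists_adj_ne_of_mem_commonNeighbors (hG : G.IsTree) (hxy : x ≠ y)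
    (hv : v ∈ G.commonNeighbors x y) (hx : IsLeaf G x ∨ ¬ IsSupport G x)
    (hy : IsLeaf G y ∨ ¬ IsSupport G y) (hwv : w ≠ v) : ∃ u, G.Adj w u ∧ u ≠ x ∧ u ≠ y := by
  by_cases hwx : G.Adj w x
  · exact exists_adj_ne_of_adj_of_mem_commonNeighbors hG.isAcyclic hxy hv hx hwv hwx
  by_cases hwy : G.Adj w y
  · obtain ⟨u, hwu, huy, hux⟩ := exists_adj_ne_of_adj_of_mem_commonNeighbors hG.isAcyclic
      hxy.symm (SimpleGraph.commonNeighbors_symm G x y ▸ hv) hy hwv hwy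
    exact ⟨u, hwu, hux, huy⟩
  obtain ⟨u, hwu⟩ := (hG.connected w v).nonempty_neighborSet_left hwv
  exact ⟨u, hwu, fun h => hwx (h ▸ hwu), fun h => hwy (h ▸ hwu)⟩

theorem exists_mem_eq_or_adj_of_isDomSet (hD : IsDomSet G D) (x : W) :
    ∃ d ∈ D, d = x ∨ (G.Adj x d ∧ (IsSupport G x → IsLeaf G d)) := by
  by_cases hxD : x ∈ D
  · exact ⟨x, hxD, .inl rfl⟩
  by_cases hx : IsSupport G x
  · obtain ⟨l, hxl, hl⟩ := hx
    refine ⟨l, ?_, .inr ⟨hxl, fun _ => hl⟩⟩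
    by_contra hlD
    obtain ⟨u, huD, hul⟩ := hD l hlD
    exact hxD (hl.eq_of_adj hul.symm hxl.symm ▸ huD)
  · obtain ⟨u, huD, hux⟩ := hD x hxD
    exact ⟨u, huD, .inr ⟨hux.symm, fun h => absurd h hx⟩⟩

end Leaves

def SupportCondition {W : Type} [Fintype W] (G : SimpleGraph W) [DecidableRel G.Adj]
    (B : Finset W) : Prop :=
  ∀ v ∈ B, IsSupport G v → IsWeakSupport G v ∧ ∀ u, G.Adj v u → ¬ IsLeaf G u → IsSupport G u

def DistTwoCondition {W : Type} [Fintype W] (G : SimpleGraph W) [DecidableRel G.Adj]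
    (A : Finset W) : Prop :=
  ∀ x ∈ A, ∀ y ∈ A, ¬ IsLeaf G x → ¬ IsSupport G x → ¬ IsLeaf G y → ¬ IsSupport G y →
    G.dist x y ≠ 2

theorem SupportCondition.eq_of_isLeaf_of_not_isSupport {W : Type} [Fintype W]
    {G : SimpleGraph W} [DecidableRel G.Adj] {B : Finset W} {d a a' : W}
    (hS : SupportCondition G B) (hd : d ∈ B) (hda : G.Adj d a) (ha : IsLeaf G a)
    (hda' : G.Adj d a') (ha' : ¬ IsSupport G a') : a = a' := by
  obtain ⟨hweak, hnonleaf⟩ := hS d hd ⟨a, hda, ha⟩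
  by_cases hl' : IsLeaf G a'
  · exact (isWeakSupport_iff ⟨a, hda, ha⟩).mp hweak a a' hda ha hda' hl'
  · exact absurd (hnonleaf a' hda' hl') ha'

namespace IsBipartition

variable {G : SimpleGraph V} [DecidableRel G.Adj] {A B D : Finset V} {v x y : V}

theorem domNum_lt_card_of_mem_commonNeighbors (hbip : IsBipartition G A B) (hG : G.IsTree)
    (hv : v ∈ B) (hxy : x ≠ y) (hvxy : v ∈ G.commonNeighbors x y)
    (hx : IsLeaf G x ∨ ¬ IsSupport G x) (hy : IsLeaf G y ∨ ¬ IsSupport G y) :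
    domNum G < A.card := by
  obtain ⟨hxv, hyv⟩ := (SimpleGraph.mem_commonNeighbors G).mp hvxy
  exact hbip.domNum_lt_card_left hv hxy hxv.symm hyv.symm fun _ _ hwv =>
    exists_adj_ne_of_mem_commonNeighbors hG hxy hvxy hx hy hwv

theorem supportCondition_of_card_le_domNum (hbip : IsBipartition G A B) (hG : G.IsTree)
    (h : A.card ≤ domNum G) : SupportCondition G B := by
  intro v hv hs
  have hlt {x y : V} (hvx : G.Adj v x) (hvy : G.Adj v y) (hxy : x ≠ y)
      (hx : IsLeaf G x ∨ ¬ IsSupport G x) (hy : IsLeaf G y ∨ ¬ IsSupport G y) : False :=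
    (hbip.domNum_lt_card_of_mem_commonNeighbors hG hv hxy ⟨hvx.symm, hvy.symm⟩ hx hy).not_ge h
  obtain ⟨l, hvl, hl⟩ := hs
  refine ⟨(isWeakSupport_iff ⟨l, hvl, hl⟩).mpr fun x y hvx hx hvy hy => ?_, fun u hvu hu => ?_⟩
  · by_contra hxy
    exact hlt hvx hvy hxy (.inl hx) (.inl hy)
  · by_contra hus
    exact hlt hvl hvu (fun h => hu (h ▸ hl)) (.inl hl) (.inr hus)

theorem distTwoCondition_of_card_le_domNum (hbip : IsBipartition G A B) (hG : G.IsTree)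
    (h : A.card ≤ domNum G) : DistTwoCondition G A := by
  intro x hx y _ _ hxs _ hys hdist
  obtain ⟨hxy, -, v, hv⟩ := ((hG.connected x y).dist_eq_two_iff).mp hdist
  have hvB := hbip.mem_right_of_adj ((SimpleGraph.mem_commonNeighbors G).mp hv).1 hx
  exact (hbip.domNum_lt_card_of_mem_commonNeighbors hG hvB hxy hv (.inr hxs) (.inr hys)).not_ge h

theorem eq_of_adj_of_not_isSupport (hbip : IsBipartition G A B) (hconn : G.Connected)
    (hS : SupportCondition G B) (hD2 : DistTwoCondition G A) {a a' d : V} (ha : a ∈ A)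
    (ha' : a' ∈ A) (hsa : ¬ IsSupport G a) (hsa' : ¬ IsSupport G a') (had : G.Adj a d)
    (ha'd : G.Adj a' d) : a = a' := by
  have hd := hbip.mem_right_of_adj had ha
  by_cases hl : IsLeaf G a
  · exact hS.eq_of_isLeaf_of_not_isSupport hd had.symm hl ha'd.symm hsa'
  by_cases hl' : IsLeaf G a'
  · exact (hS.eq_of_isLeaf_of_not_isSupport hd ha'd.symm hl' had.symm hsa).symm
  by_contra haa'
  exact hD2 a ha a' ha' hl hsa hl' hsa' ((hconn a a').dist_eq_two_iff.mpr
    ⟨haa', hbip.not_adj_of_mem_left ha ha', d, had, ha'd⟩)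

theorem card_le_of_isDomSet (hbip : IsBipartition G A B) (hconn : G.Connected)
    (hS : SupportCondition G B) (hD2 : DistTwoCondition G A) (hD : IsDomSet G D) :
    A.card ≤ D.card := by
  choose f hfD hf using exists_mem_eq_or_adj_of_isDomSet hD
  refine card_le_card_of_injOn f (fun a _ => hfD a) fun a ha a' ha' heq => ?_
  rcases hf a with h | ⟨had, hleaf⟩ <;> rcases hf a' with h' | ⟨ha'd, hleaf'⟩
  · exact h.symm.trans (heq.trans h')
  · exact absurd (h ▸ heq ▸ ha'd) (hbip.not_adj_of_mem_left ha' ha)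
  · exact absurd (h' ▸ heq.symm ▸ had) (hbip.not_adj_of_mem_left ha ha')
  rw [← heq] at ha'd hleaf'
  by_cases hs : IsSupport G a
  · exact (hleaf hs).eq_of_adj had.symm ha'd.symm
  by_cases hs' : IsSupport G a'
  · exact (hleaf' hs').eq_of_adj had.symm ha'd.symm
  exact hbip.eq_of_adj_of_not_isSupport hconn hS hD2 ha ha' hs hs' had ha'd

end IsBipartition

theorem tree_domNum_eq_smaller_side_characterization_general (T : SimpleGraph V)
    [DecidableRel T.Adj] (A B : Finset V) (htree : T.IsTree)
    (hbip : IsBipartition T A B) (hA : 1 ≤ A.card) :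
    domNum T = A.card ↔
      ((∀ v ∈ B, IsSupport T v →
          IsWeakSupport T v ∧ ∀ u, T.Adj v u → ¬ IsLeaf T u → IsSupport T u) ∧
       (∀ x ∈ A, ∀ y ∈ A, ¬ IsLeaf T x → ¬ IsSupport T x → ¬ IsLeaf T y → ¬ IsSupport T y →
          T.dist x y ≠ 2)) := by
  constructor
  · intro h
    exact ⟨hbip.supportCondition_of_card_le_domNum htree h.ge,
      hbip.distTwoCondition_of_card_le_domNum htree h.ge⟩
  · rintro ⟨hS, hD2⟩
    exact domNum_eq_card_of_forall_le (hbip.isDomSet_left htree.connected (card_pos.mp hA))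
      fun _ hD => hbip.card_le_of_isDomSet htree.connected hS hD2 hD

theorem tree_domNum_eq_smaller_side_characterization (T : SimpleGraph V)
    [DecidableRel T.Adj] (A B : Finset V) (htree : T.IsTree)
    (hbip : IsBipartition T A B) (hA : 1 ≤ A.card) (hAB : A.card ≤ B.card) :
    domNum T = A.card ↔
      ((∀ v ∈ B, IsSupport T v →
          IsWeakSupport T v ∧ ∀ u, T.Adj v u → ¬ IsLeaf T u → IsSupport T u) ∧
       (∀ x ∈ A, ∀ y ∈ A, ¬ IsLeaf T x → ¬ IsSupport T x → ¬ IsLeaf T y → ¬ IsSupport T y →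
          T.dist x y ≠ 2)) :=
  tree_domNum_eq_smaller_side_characterization_general T A B htree hbip hA
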